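/- For every n ≥ 0, each j ∈ {1,…,d} and i ∈ {3,4}: (1) E[(Y_{1j} − θ/2)(Y_{2j} − θ/2)] = (θ/2)y_{n;θ} + λ(v_{n;θ} − (θ/2)x_{n;θ}); (2) E[(Y_{1j} − θ/2)(Y_{ij} − (1−θ)/2)] = (θ/2)z_{n;1−θ} − (λ/2)(u_{n;θ} − (θ/2)x_{n;θ}) − (λ/2)(v_{n;θ} − (θ/2)x_{n;θ}); (3) E[(Y_{2j} − θ/2)(Y_{ij} − (1−θ)/2)] = (θ/2)z_{n;1−θ} − λ(v_{n;θ} − (θ/2)x_{n;θ}); (4) E[(Y_{3j} − (1−θ)/2)(Y_{4j} − (1−θ)/2)] = ((1−θ)/2)y_{n;1−θ} + (λ/2)(u_{n;θ} − (θ/2)x_{n;θ}) + (3λ/2)(v_{n;θ} − (θ/2)x_{n;θ}) − λ(w_{n;1−θ} − ((1−θ)/2)x_{n;1−θ}). -/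
import Mathlib


open Finset Filter

namespace Broadcast

/-- The root distribution `π = (θ/2, θ/2, (1-θ)/2, (1-θ)/2)`. -/
noncomputable def rootDist (θ : ℝ) (i : Fin 4) : ℝ :=
  if (i : ℕ) < 2 then θ / 2 else (1 - θ) / 2

/-- The transition matrix `P i j = λ · 1{i=j} + (1-λ) π_j`. -/
noncomputable def trans (θ lam : ℝ) (i j : Fin 4) : ℝ :=
  (if i = j then lam else 0) + (1 - lam) * rootDist θ j

/-- Vertices at level `n` of the infinite rooted `d`-ary tree, encoded as paths. -/
abbrev Vtx (d n : ℕ) := Fin n → Fin d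

/-- Configurations (assignments of states) on level `n`. -/
abbrev Config (d n : ℕ) := Vtx d n → Fin 4

/-- Restriction of a level-`(n+1)` configuration to the subtree of the `j`-th child
of the root. -/
def restrict {d n : ℕ} (j : Fin d) (A : Config d (n + 1)) : Config d n :=
  fun p => A (Fin.cons j p)

/-- `lik θ λ d n i A` is the probability of observing the configuration `A` on level `n`,
given that the root is in state `i` (the broadcasting process). -/
noncomputable def lik (θ lam : ℝ) (d : ℕ) : (n : ℕ) → Fin 4 → Config d n → ℝ
  | 0, i, A => if A Fin.elim0 = i then 1 else 0
  | n + 1, i, A =>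
      ∏ j : Fin d, ∑ k : Fin 4, trans θ lam i k * lik θ lam d n k (restrict j A)

/-- Unconditional probability of observing the configuration `A` on level `n`. -/
noncomputable def marg (θ lam : ℝ) (d n : ℕ) (A : Config d n) : ℝ :=
  ∑ i : Fin 4, rootDist θ i * lik θ lam d n i A

/-- The posterior `f_n(i, A) = P(σ_ρ = i ∣ σ(n) = A)`. -/
noncomputable def post (θ lam : ℝ) (d n : ℕ) (i : Fin 4) (A : Config d n) : ℝ :=
  rootDist θ i * lik θ lam d n i A / marg θ lam d n A

/-- Expectation of `g(σ(n))` conditioned on the root being in state `r`,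
i.e. `E g(σ^r(n))`. -/
noncomputable def condE (θ lam : ℝ) (d n : ℕ) (r : Fin 4) (g : Config d n → ℝ) : ℝ :=
  ∑ A : Config d n, lik θ lam d n r A * g A

/-- Unconditional expectation of `g(σ(n))`. -/
noncomputable def uncondE (θ lam : ℝ) (d n : ℕ) (g : Config d n → ℝ) : ℝ :=
  ∑ A : Config d n, marg θ lam d n A * g A

/-- `x_{n;θ} = E f_n(1, σ¹(n)) - θ/2`. -/
noncomputable def xT (θ lam : ℝ) (d n : ℕ) : ℝ :=
  condE θ lam d n 0 (fun A => post θ lam d n 0 A) - θ / 2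

/-- `y_{n;θ} = E f_n(2, σ¹(n)) - θ/2`. -/
noncomputable def yT (θ lam : ℝ) (d n : ℕ) : ℝ :=
  condE θ lam d n 0 (fun A => post θ lam d n 1 A) - θ / 2

/-- `z_{n;θ} = E f_n(1, σ³(n)) - θ/2`. -/
noncomputable def zT (θ lam : ℝ) (d n : ℕ) : ℝ :=
  condE θ lam d n 2 (fun A => post θ lam d n 0 A) - θ / 2

/-- `x_{n;1-θ} = E f_n(3, σ³(n)) - (1-θ)/2`. -/
noncomputable def xH (θ lam : ℝ) (d n : ℕ) : ℝ :=
  condE θ lam d n 2 (fun A => post θ lam d n 2 A) - (1 - θ) / 2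

/-- `y_{n;1-θ} = E f_n(4, σ³(n)) - (1-θ)/2`. -/
noncomputable def yH (θ lam : ℝ) (d n : ℕ) : ℝ :=
  condE θ lam d n 2 (fun A => post θ lam d n 3 A) - (1 - θ) / 2

/-- `z_{n;1-θ} = E f_n(3, σ¹(n)) - (1-θ)/2`. -/
noncomputable def zH (θ lam : ℝ) (d n : ℕ) : ℝ :=
  condE θ lam d n 0 (fun A => post θ lam d n 2 A) - (1 - θ) / 2

/-- `u_{n;θ} = E (f_n(1, σ¹(n)) - θ/2)²`. -/
noncomputable def uT (θ lam : ℝ) (d n : ℕ) : ℝ :=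
  condE θ lam d n 0 (fun A => (post θ lam d n 0 A - θ / 2) ^ 2)

/-- `v_{n;θ} = E (f_n(2, σ¹(n)) - θ/2)²`. -/
noncomputable def vT (θ lam : ℝ) (d n : ℕ) : ℝ :=
  condE θ lam d n 0 (fun A => (post θ lam d n 1 A - θ / 2) ^ 2)

/-- `w_{n;θ} = E (f_n(1, σ³(n)) - θ/2)²`. -/
noncomputable def wT (θ lam : ℝ) (d n : ℕ) : ℝ :=
  condE θ lam d n 2 (fun A => (post θ lam d n 0 A - θ / 2) ^ 2)

/-- `w_{n;1-θ} = E (f_n(3, σ¹(n)) - (1-θ)/2)²`. -/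
noncomputable def wH (θ lam : ℝ) (d n : ℕ) : ℝ :=
  condE θ lam d n 0 (fun A => (post θ lam d n 2 A - (1 - θ) / 2) ^ 2)

/-- `Y_{ij}(n) = f_n(i, σ_j(n+1))`, viewed as a function of the level-`(n+1)`
configuration. -/
noncomputable def Yf (θ lam : ℝ) (d n : ℕ) (i : Fin 4) (j : Fin d)
    (A : Config d (n + 1)) : ℝ :=
  post θ lam d n i (restrict j A)

/-- `Z_i(n)`, viewed as a function of the level-`(n+1)` configuration. -/
noncomputable def Zf (θ lam : ℝ) (d n : ℕ) (i : Fin 4) (A : Config d (n + 1)) : ℝ :=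
  if (i : ℕ) < 2 then
    ∏ j : Fin d, (1 + (2 * lam / θ) * (Yf θ lam d n i j A - θ / 2))
  else
    ∏ j : Fin d, (1 + (2 * lam / (1 - θ)) * (Yf θ lam d n i j A - (1 - θ) / 2))

/-- `S = (θ/2)Z₁ + (θ/2)Z₂ + ((1-θ)/2)Z₃ + ((1-θ)/2)Z₄`. -/
noncomputable def Sf (θ lam : ℝ) (d n : ℕ) (A : Config d (n + 1)) : ℝ :=
  θ / 2 * Zf θ lam d n 0 A + θ / 2 * Zf θ lam d n 1 A
    + (1 - θ) / 2 * Zf θ lam d n 2 A + (1 - θ) / 2 * Zf θ lam d n 3 A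

/-- Total variation distance between the laws of `σ^i(n)` and `σ^j(n)`. -/
noncomputable def dTV (θ lam : ℝ) (d n : ℕ) (i j : Fin 4) : ℝ :=
  (∑ A : Config d n, |lik θ lam d n i A - lik θ lam d n j A|) / 2

/-- The model is reconstructible if for some pair of root states the total variation
distance between the conditioned level-`n` configurations does not vanish. -/
def Reconstructible (θ lam : ℝ) (d : ℕ) : Prop :=
  ∃ i j : Fin 4, 0 < Filter.limsup (fun n => dTV θ lam d n i j) Filter.atTop

/-- Probability that the root is in state `i` and the states at the vertices
`v 1, …, v k ∈ L(M)` are `c 1, …, c k`. -/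
noncomputable def jointRootEvent (θ lam : ℝ) (d M k : ℕ) (v : Fin k → Vtx d M)
    (c : Fin k → Fin 4) (i : Fin 4) : ℝ :=
  ∑ A : Config d M,
    if ∀ t, A (v t) = c t then rootDist θ i * lik θ lam d M i A else 0

/-- Conditional probability `P(σ_ρ = i ∣ σ_{v t} = c t, 1 ≤ t ≤ k)`. -/
noncomputable def condRoot (θ lam : ℝ) (d M k : ℕ) (v : Fin k → Vtx d M)
    (c : Fin k → Fin 4) (i : Fin 4) : ℝ :=
  jointRootEvent θ lam d M k v c i / ∑ i' : Fin 4, jointRootEvent θ lam d M k v c i'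



section Infra

variable {θ lam : ℝ} {d : ℕ}

lemma rootDist_zero (θ : ℝ) : rootDist θ 0 = θ/2 := rfl
lemma rootDist_one (θ : ℝ) : rootDist θ 1 = θ/2 := rfl
lemma rootDist_two (θ : ℝ) : rootDist θ 2 = (1-θ)/2 := rfl
lemma rootDist_three (θ : ℝ) : rootDist θ 3 = (1-θ)/2 := rfl

lemma sum_rootDist (θ : ℝ) : ∑ i : Fin 4, rootDist θ i = 1 := by
  rw [Fin.sum_univ_four, rootDist_zero, rootDist_one, rootDist_two, rootDist_three]; ring

lemma sum_trans (θ lam : ℝ) (i : Fin 4) : ∑ k : Fin 4, trans θ lam i k = 1 := by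
  simp only [trans]
  rw [Finset.sum_add_distrib, Finset.sum_ite_eq, ← Finset.mul_sum, sum_rootDist]
  simp

lemma lik_succ (θ lam : ℝ) (d n : ℕ) (i : Fin 4) (A : Config d (n+1)) :
    lik θ lam d (n+1) i A
      = ∏ j : Fin d, ∑ k : Fin 4, trans θ lam i k * lik θ lam d n k (restrict j A) := rfl

lemma lik_nonneg (hP : ∀ i j : Fin 4, 0 ≤ trans θ lam i j) :
    ∀ (n : ℕ) (i : Fin 4) (A : Config d n), 0 ≤ lik θ lam d n i A
  | 0, i, A => by dsimp [lik]; split <;> norm_num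
  | n+1, i, A => by
      rw [lik_succ]
      exact Finset.prod_nonneg fun j _ => Finset.sum_nonneg fun k _ =>
        mul_nonneg (hP i k) (lik_nonneg hP n k _)

def splitEquiv (d n : ℕ) : Config d (n+1) ≃ (Fin d → Config d n) where
  toFun A j := restrict j A
  invFun G q := G (q 0) (Fin.tail q)
  left_inv A := by funext q; simp only [restrict]; rw [Fin.cons_self_tail]
  right_inv G := by funext j p; simp [restrict, Fin.tail_cons]

lemma restrict_splitEquiv_symm (n : ℕ) (G : Fin d → Config d n) (j : Fin d) :
    restrict j ((splitEquiv d n).symm G) = G j :=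
  congrFun ((splitEquiv d n).apply_symm_apply G) j

lemma sum_config_prod (n : ℕ) (F : Fin d → Config d n → ℝ) :
    ∑ A : Config d (n+1), ∏ j : Fin d, F j (restrict j A)
      = ∏ j : Fin d, ∑ B : Config d n, F j B := by
  rw [← (splitEquiv d n).symm.sum_comp (fun A => ∏ j, F j (restrict j A))]
  simp_rw [restrict_splitEquiv_symm]
  rw [← Fintype.piFinset_univ, ← Finset.prod_univ_sum]

lemma sum_lik (θ lam : ℝ) (d : ℕ) :
    ∀ (n : ℕ) (i : Fin 4), ∑ A : Config d n, lik θ lam d n i A = 1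
  | 0, i => by
      rw [← (Equiv.funUnique (Vtx d 0) (Fin 4)).symm.sum_comp
        (fun A => lik θ lam d 0 i A)]
      simp [lik, Equiv.funUnique, Finset.sum_ite_eq']
  | n+1, i => by
      simp only [lik_succ]
      rw [sum_config_prod n (fun j B => ∑ k : Fin 4, trans θ lam i k * lik θ lam d n k B)]
      have hfac : ∀ j : Fin d, j ∈ Finset.univ →
          (∑ B : Config d n, ∑ k : Fin 4, trans θ lam i k * lik θ lam d n k B) = 1 := by
        intro j _
        rw [Finset.sum_comm]
        simp_rw [← Finset.mul_sum, sum_lik θ lam d n, mul_one]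
        exact sum_trans θ lam i
      rw [Finset.prod_congr rfl hfac, Finset.prod_const, one_pow]

end Infra

section Infra2

variable {θ lam : ℝ} {d : ℕ}

lemma condE_restrict (θ lam : ℝ) (d n : ℕ) (r : Fin 4) (j : Fin d) (h : Config d n → ℝ) :
    condE θ lam d (n+1) r (fun A => h (restrict j A))
      = ∑ k : Fin 4, trans θ lam r k * condE θ lam d n k h := by
  have hF1 : ∑ B : Config d n, ∑ k : Fin 4, trans θ lam r k * lik θ lam d n k B = 1 := by
    rw [Finset.sum_comm]; simp_rw [← Finset.mul_sum, sum_lik θ lam d n, mul_one]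
    exact sum_trans θ lam r
  have key : condE θ lam d (n+1) r (fun A => h (restrict j A))
      = ∑ A : Config d (n+1), ∏ j' : Fin d,
          ((∑ k : Fin 4, trans θ lam r k * lik θ lam d n k (restrict j' A))
            * (if j' = j then h (restrict j' A) else 1)) := by
    unfold condE
    refine Finset.sum_congr rfl fun A _ => ?_
    rw [Finset.prod_mul_distrib, Finset.prod_ite_eq', if_pos (Finset.mem_univ j), lik_succ]
  rw [key, sum_config_prod n (fun j' B =>
    (∑ k : Fin 4, trans θ lam r k * lik θ lam d n k B) * (if j' = j then h B else 1))]
  have hfac : ∀ j' : Fin d, (∑ B : Config d n,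
      (∑ k : Fin 4, trans θ lam r k * lik θ lam d n k B) * (if j' = j then h B else 1))
      = if j' = j then ∑ k : Fin 4, trans θ lam r k * condE θ lam d n k h else 1 := by
    intro j'
    by_cases hj : j' = j
    · simp only [hj, if_true]
      simp_rw [Finset.sum_mul]
      rw [Finset.sum_comm]
      unfold condE
      refine Finset.sum_congr rfl fun k _ => ?_
      rw [Finset.mul_sum]
      exact Finset.sum_congr rfl fun B _ => by ring
    · simp only [hj, if_false, mul_one]
      exact hF1
  rw [Finset.prod_congr rfl (fun j' _ => hfac j'),
    Finset.prod_ite_eq' Finset.univ j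
      (fun _ => ∑ k : Fin 4, trans θ lam r k * condE θ lam d n k h),
    if_pos (Finset.mem_univ j)]

lemma uncondE_eq_sum (θ lam : ℝ) (d n : ℕ) (g : Config d n → ℝ) :
    uncondE θ lam d n g = ∑ i : Fin 4, rootDist θ i * condE θ lam d n i g := by
  unfold uncondE marg condE
  simp_rw [Finset.sum_mul]
  rw [Finset.sum_comm]
  simp_rw [mul_assoc, ← Finset.mul_sum]

lemma condE_transfer (θ lam : ℝ) (d n : ℕ) (j : Fin d) (h : Config d n → ℝ) :
    condE θ lam d (n+1) 0 (fun A => h (restrict j A))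
      = lam * condE θ lam d n 0 h + (1 - lam) * uncondE θ lam d n h := by
  rw [condE_restrict, uncondE_eq_sum, Fin.sum_univ_four, Fin.sum_univ_four]
  simp only [trans, rootDist_zero, rootDist_one, rootDist_two, rootDist_three]
  rw [if_pos trivial, if_neg (show ¬((0:Fin 4) = 1) by decide),
    if_neg (show ¬((0:Fin 4) = 2) by decide), if_neg (show ¬((0:Fin 4) = 3) by decide)]
  ring

lemma rootDist_pos (hθ : θ ∈ Set.Ioo (0:ℝ) 1) (i : Fin 4) : 0 < rootDist θ i := by
  obtain ⟨h0, h1⟩ := hθ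
  unfold rootDist; split <;> linarith

lemma lik_eq_zero_of_marg (hθ : θ ∈ Set.Ioo (0:ℝ) 1)
    (hP : ∀ i j : Fin 4, 0 ≤ trans θ lam i j) {n : ℕ} {A : Config d n}
    (hm : marg θ lam d n A = 0) (i : Fin 4) : lik θ lam d n i A = 0 := by
  have h := (Finset.sum_eq_zero_iff_of_nonneg (fun k _ =>
    mul_nonneg (rootDist_pos hθ k).le (lik_nonneg hP n k A))).mp hm i (Finset.mem_univ i)
  have := rootDist_pos hθ i
  nlinarith [this]

lemma post_mul_marg (hθ : θ ∈ Set.Ioo (0:ℝ) 1)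
    (hP : ∀ i j : Fin 4, 0 ≤ trans θ lam i j) (n : ℕ) (i : Fin 4) (A : Config d n) :
    marg θ lam d n A * post θ lam d n i A = rootDist θ i * lik θ lam d n i A := by
  unfold post
  by_cases hm : marg θ lam d n A = 0
  · rw [hm, zero_mul, lik_eq_zero_of_marg hθ hP hm, mul_zero]
  · rw [mul_comm, div_mul_cancel₀ _ hm]

lemma uncondE_post_mul (hθ : θ ∈ Set.Ioo (0:ℝ) 1)
    (hP : ∀ i j : Fin 4, 0 ≤ trans θ lam i j) (n : ℕ) (i : Fin 4) (g : Config d n → ℝ) :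
    uncondE θ lam d n (fun A => post θ lam d n i A * g A)
      = rootDist θ i * condE θ lam d n i g := by
  unfold uncondE condE
  rw [Finset.mul_sum]
  refine Finset.sum_congr rfl fun A _ => ?_
  rw [← mul_assoc, post_mul_marg hθ hP, mul_assoc]

lemma condE_one (θ lam : ℝ) (d n : ℕ) (i : Fin 4) :
    condE θ lam d n i (fun _ => 1) = 1 := by
  unfold condE; simp_rw [mul_one]; exact sum_lik θ lam d n i

lemma sum_marg (θ lam : ℝ) (d n : ℕ) : ∑ A : Config d n, marg θ lam d n A = 1 := by
  unfold marg
  rw [Finset.sum_comm]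
  simp_rw [← Finset.mul_sum, sum_lik θ lam d n, mul_one]
  exact sum_rootDist θ

lemma uncondE_add (θ lam : ℝ) (d n : ℕ) (g1 g2 : Config d n → ℝ) :
    uncondE θ lam d n (fun A => g1 A + g2 A)
      = uncondE θ lam d n g1 + uncondE θ lam d n g2 := by
  unfold uncondE; rw [← Finset.sum_add_distrib]; simp_rw [mul_add]

lemma uncondE_sub (θ lam : ℝ) (d n : ℕ) (g1 g2 : Config d n → ℝ) :
    uncondE θ lam d n (fun A => g1 A - g2 A)
      = uncondE θ lam d n g1 - uncondE θ lam d n g2 := by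
  unfold uncondE; rw [← Finset.sum_sub_distrib]; simp_rw [mul_sub]

lemma uncondE_const_mul (θ lam : ℝ) (d n : ℕ) (c : ℝ) (g : Config d n → ℝ) :
    uncondE θ lam d n (fun A => c * g A) = c * uncondE θ lam d n g := by
  unfold uncondE; rw [Finset.mul_sum]
  exact Finset.sum_congr rfl fun A _ => by ring

lemma uncondE_congr {n : ℕ} {g1 g2 : Config d n → ℝ} (h : ∀ A, g1 A = g2 A) :
    uncondE θ lam d n g1 = uncondE θ lam d n g2 := by
  unfold uncondE; exact Finset.sum_congr rfl fun A _ => by rw [h A]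

lemma condE_congr {n : ℕ} {r : Fin 4} {g1 g2 : Config d n → ℝ} (h : ∀ A, g1 A = g2 A) :
    condE θ lam d n r g1 = condE θ lam d n r g2 := by
  unfold condE; exact Finset.sum_congr rfl fun A _ => by rw [h A]

lemma uncondE_const (θ lam : ℝ) (d n : ℕ) (c : ℝ) :
    uncondE θ lam d n (fun _ => c) = c := by
  have h : uncondE θ lam d n (fun _ => c) = c * ∑ A : Config d n, marg θ lam d n A := by
    unfold uncondE; rw [Finset.mul_sum]
    exact Finset.sum_congr rfl fun A _ => mul_comm _ _
  rw [h, sum_marg, mul_one]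

lemma marg_mul_sum_post (hθ : θ ∈ Set.Ioo (0:ℝ) 1)
    (hP : ∀ i j : Fin 4, 0 ≤ trans θ lam i j) (n : ℕ) (A : Config d n) :
    marg θ lam d n A * (post θ lam d n 0 A + post θ lam d n 1 A
      + post θ lam d n 2 A + post θ lam d n 3 A) = marg θ lam d n A := by
  rw [mul_add, mul_add, mul_add, post_mul_marg hθ hP, post_mul_marg hθ hP,
    post_mul_marg hθ hP, post_mul_marg hθ hP]
  conv_rhs => rw [marg]
  rw [Fin.sum_univ_four]

lemma uncondE_sum_post_mul (hθ : θ ∈ Set.Ioo (0:ℝ) 1)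
    (hP : ∀ i j : Fin 4, 0 ≤ trans θ lam i j) (n : ℕ) (g : Config d n → ℝ) :
    uncondE θ lam d n (fun A => (post θ lam d n 0 A + post θ lam d n 1 A
      + post θ lam d n 2 A + post θ lam d n 3 A) * g A) = uncondE θ lam d n g := by
  unfold uncondE
  refine Finset.sum_congr rfl fun A _ => ?_
  rw [← mul_assoc, marg_mul_sum_post hθ hP]

end Infra2

section Recolor

variable {θ lam : ℝ} {d : ℕ}

def recolorEquiv (τ : Equiv.Perm (Fin 4)) (d n : ℕ) : Config d n ≃ Config d n where
  toFun A := fun v => τ (A v)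
  invFun A := fun v => τ.symm (A v)
  left_inv A := by funext v; simp
  right_inv A := by funext v; simp

lemma trans_recolor (τ : Equiv.Perm (Fin 4)) (hτ : ∀ i, rootDist θ (τ i) = rootDist θ i)
    (i k : Fin 4) : trans θ lam (τ i) (τ k) = trans θ lam i k := by
  unfold trans
  rw [hτ]
  congr 1
  simp [Equiv.apply_eq_iff_eq]

lemma lik_recolor (τ : Equiv.Perm (Fin 4)) (hτ : ∀ i, rootDist θ (τ i) = rootDist θ i) :
    ∀ (n : ℕ) (i : Fin 4) (A : Config d n),
      lik θ lam d n (τ i) (fun v => τ (A v)) = lik θ lam d n i A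
  | 0, i, A => by
      show (if τ (A Fin.elim0) = τ i then (1:ℝ) else 0) = if A Fin.elim0 = i then 1 else 0
      simp
  | n+1, i, A => by
      rw [lik_succ, lik_succ]
      refine Finset.prod_congr rfl fun j _ => ?_
      rw [← Equiv.sum_comp τ (fun k => trans θ lam (τ i) k
        * lik θ lam d n k (restrict j fun v => τ (A v)))]
      refine Finset.sum_congr rfl fun k _ => ?_
      rw [trans_recolor τ hτ]
      congr 1
      have hres : restrict j (fun v => τ (A v)) = fun p => τ (restrict j A p) := rfl
      rw [hres]
      exact lik_recolor τ hτ n k (restrict j A)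

lemma marg_recolor (τ : Equiv.Perm (Fin 4)) (hτ : ∀ i, rootDist θ (τ i) = rootDist θ i)
    (n : ℕ) (A : Config d n) :
    marg θ lam d n (fun v => τ (A v)) = marg θ lam d n A := by
  unfold marg
  rw [← Equiv.sum_comp τ (fun i => rootDist θ i * lik θ lam d n i (fun v => τ (A v)))]
  exact Finset.sum_congr rfl fun i _ => by rw [hτ, lik_recolor τ hτ]

lemma post_recolor (τ : Equiv.Perm (Fin 4)) (hτ : ∀ i, rootDist θ (τ i) = rootDist θ i)
    (n : ℕ) (i : Fin 4) (A : Config d n) :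
    post θ lam d n i (fun v => τ (A v)) = post θ lam d n (τ.symm i) A := by
  unfold post
  rw [marg_recolor τ hτ]
  conv_lhs => rw [show i = τ (τ.symm i) from (τ.apply_symm_apply i).symm]
  rw [hτ, lik_recolor τ hτ]

lemma uncondE_recolor (τ : Equiv.Perm (Fin 4)) (hτ : ∀ i, rootDist θ (τ i) = rootDist θ i)
    (n : ℕ) (g : Config d n → ℝ) :
    uncondE θ lam d n (fun A => g (fun v => τ (A v))) = uncondE θ lam d n g := by
  unfold uncondE
  calc ∑ A : Config d n, marg θ lam d n A * g (fun v => τ (A v))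
      = ∑ A : Config d n, marg θ lam d n (recolorEquiv τ d n A) * g (recolorEquiv τ d n A) := by
        refine Finset.sum_congr rfl fun A _ => ?_
        rw [show recolorEquiv τ d n A = fun v => τ (A v) from rfl, marg_recolor τ hτ]
    _ = ∑ A : Config d n, marg θ lam d n A * g A :=
        (recolorEquiv τ d n).sum_comp (fun A => marg θ lam d n A * g A)

end Recolor

/-- centered posterior -/
noncomputable def q (θ lam : ℝ) (d n : ℕ) (i : Fin 4) (A : Config d n) : ℝ :=
  post θ lam d n i A - rootDist θ i

/-- centered second moments -/
noncomputable def E2 (θ lam : ℝ) (d n : ℕ) (i j : Fin 4) : ℝ :=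
  uncondE θ lam d n (fun A => q θ lam d n i A * q θ lam d n j A)

/-- centered third moments -/
noncomputable def E3 (θ lam : ℝ) (d n : ℕ) (i j k : Fin 4) : ℝ :=
  uncondE θ lam d n (fun A => q θ lam d n i A * q θ lam d n j A * q θ lam d n k A)

section Moments

variable {θ lam : ℝ} {d : ℕ}

lemma condE_sub_const (θ lam : ℝ) (d n : ℕ) (r : Fin 4) (g : Config d n → ℝ) (c : ℝ) :
    condE θ lam d n r (fun A => g A - c) = condE θ lam d n r g - c := by
  unfold condE
  simp_rw [mul_sub]
  rw [Finset.sum_sub_distrib, ← Finset.sum_mul, sum_lik, one_mul]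

lemma uncondE_post (hθ : θ ∈ Set.Ioo (0:ℝ) 1)
    (hP : ∀ i j : Fin 4, 0 ≤ trans θ lam i j) (n : ℕ) (i : Fin 4) :
    uncondE θ lam d n (fun A => post θ lam d n i A) = rootDist θ i := by
  have h : uncondE θ lam d n (fun A => post θ lam d n i A)
      = uncondE θ lam d n (fun A => post θ lam d n i A * (fun _ : Config d n => (1:ℝ)) A) :=
    uncondE_congr fun A => by simp
  rw [h, uncondE_post_mul hθ hP, condE_one, mul_one]

lemma q_recolor (τ : Equiv.Perm (Fin 4)) (hτ : ∀ i, rootDist θ (τ i) = rootDist θ i)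
    (n : ℕ) (i : Fin 4) (A : Config d n) :
    q θ lam d n i (fun v => τ (A v)) = q θ lam d n (τ.symm i) A := by
  unfold q
  rw [post_recolor τ hτ]
  congr 1
  conv_lhs => rw [show i = τ (τ.symm i) from (τ.apply_symm_apply i).symm]
  rw [hτ]

lemma E2_recolor (τ : Equiv.Perm (Fin 4)) (hτ : ∀ i, rootDist θ (τ i) = rootDist θ i)
    (n : ℕ) (i j : Fin 4) :
    E2 θ lam d n i j = E2 θ lam d n (τ.symm i) (τ.symm j) := by
  unfold E2
  rw [← uncondE_recolor τ hτ n (fun A => q θ lam d n i A * q θ lam d n j A)]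
  exact uncondE_congr fun A => by rw [q_recolor τ hτ, q_recolor τ hτ]

lemma E3_recolor (τ : Equiv.Perm (Fin 4)) (hτ : ∀ i, rootDist θ (τ i) = rootDist θ i)
    (n : ℕ) (i j k : Fin 4) :
    E3 θ lam d n i j k = E3 θ lam d n (τ.symm i) (τ.symm j) (τ.symm k) := by
  unfold E3
  rw [← uncondE_recolor τ hτ n
    (fun A => q θ lam d n i A * q θ lam d n j A * q θ lam d n k A)]
  exact uncondE_congr fun A => by
    rw [q_recolor τ hτ, q_recolor τ hτ, q_recolor τ hτ]

lemma E2_comm (θ lam : ℝ) (d n : ℕ) (i j : Fin 4) :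
    E2 θ lam d n i j = E2 θ lam d n j i :=
  uncondE_congr fun A => mul_comm _ _

lemma E3_perm12 (θ lam : ℝ) (d n : ℕ) (i j k : Fin 4) :
    E3 θ lam d n i j k = E3 θ lam d n j i k :=
  uncondE_congr fun A => by ring

lemma E3_perm23 (θ lam : ℝ) (d n : ℕ) (i j k : Fin 4) :
    E3 θ lam d n i j k = E3 θ lam d n i k j :=
  uncondE_congr fun A => by ring

lemma E2_eq (hθ : θ ∈ Set.Ioo (0:ℝ) 1)
    (hP : ∀ i j : Fin 4, 0 ≤ trans θ lam i j) (n : ℕ) (i j : Fin 4) :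
    E2 θ lam d n i j
      = rootDist θ i * (condE θ lam d n i (fun A => post θ lam d n j A) - rootDist θ j) := by
  have h0 : E2 θ lam d n i j = uncondE θ lam d n
      (fun A => post θ lam d n i A * (post θ lam d n j A - rootDist θ j)
        - rootDist θ i * (post θ lam d n j A - rootDist θ j)) :=
    uncondE_congr fun A => by unfold q; ring
  rw [h0]
  simp only [uncondE_sub, uncondE_const_mul, uncondE_post_mul hθ hP, condE_sub_const,
    uncondE_post hθ hP, uncondE_const]
  ring

lemma condE0_qq (hθ : θ ∈ Set.Ioo (0:ℝ) 1)
    (hP : ∀ i j : Fin 4, 0 ≤ trans θ lam i j) (n : ℕ) (i j : Fin 4) :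
    θ/2 * condE θ lam d n 0 (fun A => q θ lam d n i A * q θ lam d n j A)
      = E3 θ lam d n 0 i j + θ/2 * E2 θ lam d n i j := by
  rw [show (θ/2 : ℝ) = rootDist θ 0 from rfl, ← uncondE_post_mul hθ hP]
  unfold E3 E2
  rw [← uncondE_const_mul, ← uncondE_add]
  exact uncondE_congr fun A => by simp only [q, rootDist_zero]; ring

lemma Z_gen (hθ : θ ∈ Set.Ioo (0:ℝ) 1)
    (hP : ∀ i j : Fin 4, 0 ≤ trans θ lam i j) (n : ℕ) (i j : Fin 4) :
    E3 θ lam d n i j 0 + E3 θ lam d n i j 1 + E3 θ lam d n i j 2 + E3 θ lam d n i j 3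
      = 0 := by
  have h1 : E3 θ lam d n i j 0 + E3 θ lam d n i j 1 + E3 θ lam d n i j 2
        + E3 θ lam d n i j 3
      = uncondE θ lam d n (fun A => (post θ lam d n 0 A + post θ lam d n 1 A
          + post θ lam d n 2 A + post θ lam d n 3 A)
          * (q θ lam d n i A * q θ lam d n j A))
        - uncondE θ lam d n (fun A => q θ lam d n i A * q θ lam d n j A) := by
    unfold E3
    rw [← uncondE_add, ← uncondE_add, ← uncondE_add, ← uncondE_sub]
    exact uncondE_congr fun A => by
      simp only [q, rootDist_zero, rootDist_one, rootDist_two, rootDist_three]; ring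
  rw [h1, uncondE_sum_post_mul hθ hP, sub_self]

end Moments

lemma rootDist_swap01 (θ : ℝ) :
    ∀ i, rootDist θ (Equiv.swap (0:Fin 4) 1 i) = rootDist θ i := by
  intro i
  fin_cases i <;> rfl

lemma rootDist_swap23 (θ : ℝ) :
    ∀ i, rootDist θ (Equiv.swap (2:Fin 4) 3 i) = rootDist θ i := by
  intro i
  fin_cases i <;> rfl

/-- Cross moments of the `Y_{ij}(n)`. -/
theorem Y_cross_moments (θ lam : ℝ) (hθ : θ ∈ Set.Ioo (0 : ℝ) 1) (hlam : |lam| ≤ 1)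
    (hP : ∀ i j : Fin 4, 0 ≤ trans θ lam i j) (d : ℕ) (hd : 2 ≤ d) (n : ℕ) :
    ∀ j : Fin d,
      condE θ lam d (n + 1) 0
          (fun A => (Yf θ lam d n 0 j A - θ / 2) * (Yf θ lam d n 1 j A - θ / 2))
        = θ / 2 * yT θ lam d n + lam * (vT θ lam d n - θ / 2 * xT θ lam d n) ∧
      (∀ i : Fin 4, 2 ≤ (i : ℕ) →
        condE θ lam d (n + 1) 0
            (fun A => (Yf θ lam d n 0 j A - θ / 2) * (Yf θ lam d n i j A - (1 - θ) / 2))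
          = θ / 2 * zH θ lam d n - lam / 2 * (uT θ lam d n - θ / 2 * xT θ lam d n)
            - lam / 2 * (vT θ lam d n - θ / 2 * xT θ lam d n) ∧
        condE θ lam d (n + 1) 0
            (fun A => (Yf θ lam d n 1 j A - θ / 2) * (Yf θ lam d n i j A - (1 - θ) / 2))
          = θ / 2 * zH θ lam d n - lam * (vT θ lam d n - θ / 2 * xT θ lam d n)) ∧
      condE θ lam d (n + 1) 0
          (fun A => (Yf θ lam d n 2 j A - (1 - θ) / 2) * (Yf θ lam d n 3 j A - (1 - θ) / 2))
        = (1 - θ) / 2 * yH θ lam d n + lam / 2 * (uT θ lam d n - θ / 2 * xT θ lam d n)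
          + 3 * lam / 2 * (vT θ lam d n - θ / 2 * xT θ lam d n)
          - lam * (wH θ lam d n - (1 - θ) / 2 * xH θ lam d n) := by
  intro j
  have hm : (θ/2 : ℝ) ≠ 0 := ne_of_gt (by linarith [hθ.1])
  -- value lemmas
  have m00 : E2 θ lam d n 0 0 = θ/2 * xT θ lam d n := by
    rw [E2_eq hθ hP, rootDist_zero]; unfold xT; rfl
  have m01 : E2 θ lam d n 0 1 = θ/2 * yT θ lam d n := by
    rw [E2_eq hθ hP, rootDist_zero, rootDist_one]; unfold yT; rfl
  have m02 : E2 θ lam d n 0 2 = θ/2 * zH θ lam d n := by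
    rw [E2_eq hθ hP, rootDist_zero, rootDist_two]; unfold zH; rfl
  have m22 : E2 θ lam d n 2 2 = (1-θ)/2 * xH θ lam d n := by
    rw [E2_eq hθ hP, rootDist_two]; unfold xH; rfl
  have m23 : E2 θ lam d n 2 3 = (1-θ)/2 * yH θ lam d n := by
    rw [E2_eq hθ hP, rootDist_two, rootDist_three]; unfold yH; rfl
  have mu : θ/2 * uT θ lam d n = E3 θ lam d n 0 0 0 + θ/2 * E2 θ lam d n 0 0 := by
    have h : uT θ lam d n
        = condE θ lam d n 0 (fun A => q θ lam d n 0 A * q θ lam d n 0 A) := by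
      unfold uT
      exact condE_congr fun A => by simp only [q, rootDist_zero]; ring
    rw [h, condE0_qq hθ hP]
  have mv : θ/2 * vT θ lam d n = E3 θ lam d n 0 1 1 + θ/2 * E2 θ lam d n 1 1 := by
    have h : vT θ lam d n
        = condE θ lam d n 0 (fun A => q θ lam d n 1 A * q θ lam d n 1 A) := by
      unfold vT
      exact condE_congr fun A => by simp only [q, rootDist_one]; ring
    rw [h, condE0_qq hθ hP]
  have mw : θ/2 * wH θ lam d n = E3 θ lam d n 0 2 2 + θ/2 * E2 θ lam d n 2 2 := by
    have h : wH θ lam d n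
        = condE θ lam d n 0 (fun A => q θ lam d n 2 A * q θ lam d n 2 A) := by
      unfold wH
      exact condE_congr fun A => by simp only [q, rootDist_two]; ring
    rw [h, condE0_qq hθ hP]
  -- symmetry lemmas
  have s11 : E2 θ lam d n 1 1 = E2 θ lam d n 0 0 := by
    have h := E2_recolor (lam := lam) (d := d) (Equiv.swap (0:Fin 4) 1) (rootDist_swap01 θ) n 1 1
    rwa [show (Equiv.swap (0:Fin 4) 1).symm 1 = 0 by decide] at h
  have s12 : E2 θ lam d n 1 2 = E2 θ lam d n 0 2 := by
    have h := E2_recolor (lam := lam) (d := d) (Equiv.swap (0:Fin 4) 1) (rootDist_swap01 θ) n 1 2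
    rwa [show (Equiv.swap (0:Fin 4) 1).symm 1 = 0 by decide,
      show (Equiv.swap (0:Fin 4) 1).symm 2 = 2 by decide] at h
  have s03 : E2 θ lam d n 0 3 = E2 θ lam d n 0 2 := by
    have h := E2_recolor (lam := lam) (d := d) (Equiv.swap (2:Fin 4) 3) (rootDist_swap23 θ) n 0 3
    rwa [show (Equiv.swap (2:Fin 4) 3).symm 0 = 0 by decide,
      show (Equiv.swap (2:Fin 4) 3).symm 3 = 2 by decide] at h
  have s13 : E2 θ lam d n 1 3 = E2 θ lam d n 1 2 := by
    have h := E2_recolor (lam := lam) (d := d) (Equiv.swap (2:Fin 4) 3) (rootDist_swap23 θ) n 1 3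
    rwa [show (Equiv.swap (2:Fin 4) 3).symm 1 = 1 by decide,
      show (Equiv.swap (2:Fin 4) 3).symm 3 = 2 by decide] at h
  have t001 : E3 θ lam d n 0 0 1 = E3 θ lam d n 0 1 1 := by
    have h := E3_recolor (lam := lam) (d := d) (Equiv.swap (0:Fin 4) 1) (rootDist_swap01 θ) n 0 0 1
    rw [show (Equiv.swap (0:Fin 4) 1).symm 0 = 1 by decide,
      show (Equiv.swap (0:Fin 4) 1).symm 1 = 0 by decide] at h
    rw [h, E3_perm23 θ lam d n 1 1 0, E3_perm12 θ lam d n 1 0 1]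
  have t003 : E3 θ lam d n 0 0 3 = E3 θ lam d n 0 0 2 := by
    have h := E3_recolor (lam := lam) (d := d) (Equiv.swap (2:Fin 4) 3) (rootDist_swap23 θ) n 0 0 3
    rwa [show (Equiv.swap (2:Fin 4) 3).symm 0 = 0 by decide,
      show (Equiv.swap (2:Fin 4) 3).symm 3 = 2 by decide] at h
  have t013 : E3 θ lam d n 0 1 3 = E3 θ lam d n 0 1 2 := by
    have h := E3_recolor (lam := lam) (d := d) (Equiv.swap (2:Fin 4) 3) (rootDist_swap23 θ) n 0 1 3
    rwa [show (Equiv.swap (2:Fin 4) 3).symm 0 = 0 by decide,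
      show (Equiv.swap (2:Fin 4) 3).symm 1 = 1 by decide,
      show (Equiv.swap (2:Fin 4) 3).symm 3 = 2 by decide] at h
  -- sum-to-zero reductions
  have p010 : E3 θ lam d n 0 1 0 = E3 θ lam d n 0 0 1 := E3_perm23 θ lam d n 0 1 0
  have p020 : E3 θ lam d n 0 2 0 = E3 θ lam d n 0 0 2 := E3_perm23 θ lam d n 0 2 0
  have p021 : E3 θ lam d n 0 2 1 = E3 θ lam d n 0 1 2 := E3_perm23 θ lam d n 0 2 1
  have z00 := Z_gen (lam := lam) (d := d) hθ hP n 0 0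
  have z01 := Z_gen (lam := lam) (d := d) hθ hP n 0 1
  have z02 := Z_gen (lam := lam) (d := d) hθ hP n 0 2
  have zred : E3 θ lam d n 0 0 0 + E3 θ lam d n 0 1 1 + 2 * E3 θ lam d n 0 0 2 = 0 := by
    linarith [z00, t001, t003]
  have zred3 : E3 θ lam d n 0 1 2 + E3 θ lam d n 0 1 1 = 0 := by
    linarith [z01, p010, t013, t001]
  have zred4 : E3 θ lam d n 0 2 3 + E3 θ lam d n 0 0 2 + E3 θ lam d n 0 1 2
      + E3 θ lam d n 0 2 2 = 0 := by
    linarith [z02, p020, p021]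
  refine ⟨?_, ?_, ?_⟩
  · -- part 1
    have e1 : (fun A : Config d (n+1) =>
          (Yf θ lam d n 0 j A - θ / 2) * (Yf θ lam d n 1 j A - θ / 2))
        = fun A => (fun B => q θ lam d n 0 B * q θ lam d n 1 B) (restrict j A) := by
      funext A; simp only [Yf, q, rootDist_zero, rootDist_one]
    rw [e1, condE_transfer θ lam d n j (fun B => q θ lam d n 0 B * q θ lam d n 1 B)]
    refine mul_left_cancel₀ hm ?_
    have cq := condE0_qq (lam := lam) (d := d) hθ hP n 0 1
    have uq : uncondE θ lam d n (fun A => q θ lam d n 0 A * q θ lam d n 1 A)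
        = E2 θ lam d n 0 1 := rfl
    linear_combination lam * cq + θ/2*(1 - lam) * uq + θ/2 * m01 - lam * mv
      - θ/2*lam * m00 - θ/2*lam * s11 + lam * t001
  · -- part 2 & 3
    intro i hi
    have h23 : i = 2 ∨ i = 3 := by
      rcases Nat.lt_or_ge (i : ℕ) 3 with h | h
      · left; apply Fin.ext; rw [show ((2:Fin 4):ℕ) = 2 from rfl]; omega
      · right; apply Fin.ext; rw [show ((3:Fin 4):ℕ) = 3 from rfl]
        have := i.isLt; omega
    rcases h23 with rfl | rfl
    · constructor
      · have e1 : (fun A : Config d (n+1) =>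
              (Yf θ lam d n 0 j A - θ / 2) * (Yf θ lam d n 2 j A - (1 - θ) / 2))
            = fun A => (fun B => q θ lam d n 0 B * q θ lam d n 2 B) (restrict j A) := by
          funext A; simp only [Yf, q, rootDist_zero, rootDist_two]
        rw [e1, condE_transfer θ lam d n j (fun B => q θ lam d n 0 B * q θ lam d n 2 B)]
        refine mul_left_cancel₀ hm ?_
        have cq := condE0_qq (lam := lam) (d := d) hθ hP n 0 2
        have uq : uncondE θ lam d n (fun A => q θ lam d n 0 A * q θ lam d n 2 A)
            = E2 θ lam d n 0 2 := rfl
        linear_combination lam * cq + θ/2*(1 - lam) * uq + θ/2 * m02 + lam/2 * mu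
          + lam/2 * mv + θ/2*lam * m00 + θ/2*lam/2 * s11 + lam/2 * zred
      · have e1 : (fun A : Config d (n+1) =>
              (Yf θ lam d n 1 j A - θ / 2) * (Yf θ lam d n 2 j A - (1 - θ) / 2))
            = fun A => (fun B => q θ lam d n 1 B * q θ lam d n 2 B) (restrict j A) := by
          funext A; simp only [Yf, q, rootDist_one, rootDist_two]
        rw [e1, condE_transfer θ lam d n j (fun B => q θ lam d n 1 B * q θ lam d n 2 B)]
        refine mul_left_cancel₀ hm ?_
        have cq := condE0_qq (lam := lam) (d := d) hθ hP n 1 2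
        have uq : uncondE θ lam d n (fun A => q θ lam d n 1 A * q θ lam d n 2 A)
            = E2 θ lam d n 1 2 := rfl
        linear_combination lam * cq + θ/2*(1 - lam) * uq + θ/2 * s12 + θ/2 * m02
          + lam * mv + θ/2*lam * m00 + θ/2*lam * s11 + lam * zred3
    · constructor
      · have e1 : (fun A : Config d (n+1) =>
              (Yf θ lam d n 0 j A - θ / 2) * (Yf θ lam d n 3 j A - (1 - θ) / 2))
            = fun A => (fun B => q θ lam d n 0 B * q θ lam d n 3 B) (restrict j A) := by
          funext A; simp only [Yf, q, rootDist_zero, rootDist_three]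
        rw [e1, condE_transfer θ lam d n j (fun B => q θ lam d n 0 B * q θ lam d n 3 B)]
        refine mul_left_cancel₀ hm ?_
        have cq := condE0_qq (lam := lam) (d := d) hθ hP n 0 3
        have uq : uncondE θ lam d n (fun A => q θ lam d n 0 A * q θ lam d n 3 A)
            = E2 θ lam d n 0 3 := rfl
        linear_combination lam * cq + θ/2*(1 - lam) * uq + lam * t003 + θ/2 * s03
          + θ/2 * m02 + lam/2 * mu + lam/2 * mv + θ/2*lam * m00 + θ/2*lam/2 * s11
          + lam/2 * zred
      · have e1 : (fun A : Config d (n+1) =>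
              (Yf θ lam d n 1 j A - θ / 2) * (Yf θ lam d n 3 j A - (1 - θ) / 2))
            = fun A => (fun B => q θ lam d n 1 B * q θ lam d n 3 B) (restrict j A) := by
          funext A; simp only [Yf, q, rootDist_one, rootDist_three]
        rw [e1, condE_transfer θ lam d n j (fun B => q θ lam d n 1 B * q θ lam d n 3 B)]
        refine mul_left_cancel₀ hm ?_
        have cq := condE0_qq (lam := lam) (d := d) hθ hP n 1 3
        have uq : uncondE θ lam d n (fun A => q θ lam d n 1 A * q θ lam d n 3 A)
            = E2 θ lam d n 1 3 := rfl
        linear_combination lam * cq + θ/2*(1 - lam) * uq + lam * t013 + θ/2 * s13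
          + θ/2 * s12 + θ/2 * m02 + lam * mv + θ/2*lam * m00 + θ/2*lam * s11
          + lam * zred3
  · -- part 4
    have e1 : (fun A : Config d (n+1) =>
          (Yf θ lam d n 2 j A - (1 - θ) / 2) * (Yf θ lam d n 3 j A - (1 - θ) / 2))
        = fun A => (fun B => q θ lam d n 2 B * q θ lam d n 3 B) (restrict j A) := by
      funext A; simp only [Yf, q, rootDist_two, rootDist_three]
    rw [e1, condE_transfer θ lam d n j (fun B => q θ lam d n 2 B * q θ lam d n 3 B)]
    refine mul_left_cancel₀ hm ?_
    have cq := condE0_qq (lam := lam) (d := d) hθ hP n 2 3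
    have uq : uncondE θ lam d n (fun A => q θ lam d n 2 A * q θ lam d n 3 A)
        = E2 θ lam d n 2 3 := rfl
    linear_combination lam * cq + θ/2*(1 - lam) * uq + θ/2 * m23 - lam/2 * mu
      - 3*lam/2 * mv + lam * mw - 2*(θ/2)*lam * m00 + θ/2*lam * m22
      - 3/2*(θ/2)*lam * s11 + lam * zred4 - lam/2 * zred - lam * zred3

end Broadcast
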